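/- Let k < l be integers, let S = {2k−1, 2k, …, 2l+1}, and let Q = Q[k,l] be the Nicolai supercharge on ℋ_S. For a configuration g : {2k, …, 2l} → Bool, the following are equivalent: (i) for every extension ĝ : S → Bool of g (i.e., every choice of values ĝ(2k−1), ĝ(2l+1) ∈ Bool), the basis vector e_{ĝ} satisfies Q e_{ĝ} = 0 and Q* e_{ĝ} = 0; (ii) g ∈ Υ̂_{k,l}. (Classical open-edge supersymmetric states on a finite interval correspond exactly to configurations satisfying the open SUSY boundary condition.) -/

import Mathlib

/-!
Read in coordinates, `q_{2i}` maps `ψ` to `g ↦ ±ψ(g')` when `g` reads `(0,1,0)` at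
`2i-1, 2i, 2i+1` (and to `0` otherwise), where `g'` is `g` with these three sites flipped.
Hence `Q e_g ≠ 0` iff `g` contains a triplet `(1,0,1)` centred at some even site of `[2k, 2l]`,
and `Q* e_g ≠ 0` iff it contains `(0,1,0)`: distinct terms flip distinct even sites, so nothing
cancels. Both conditions together say that no triplet is forbidden. The two edge triplets each
contain one free site of the extension, and such a triplet is forbidden for some value of its
free site exactly when the corresponding boundary condition of `Υ̂_{k,l}` fails.
-/

namespace Nicolai

/-- Configurations on the finite interval `S = {a, …, b}` of integers:
`true` = occupied, `false` = empty. -/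
abbrev Config (a b : ℤ) : Type := {i : ℤ // i ∈ Finset.Icc a b} → Bool

/-- The Hilbert space `ℋ_S` with orthonormal basis indexed by configurations. -/
abbrev Hs (a b : ℤ) : Type := EuclideanSpace ℂ (Config a b)

/-- The basis vector `e_g` associated to the configuration `g`. -/
noncomputable def e (a b : ℤ) (g : Config a b) : Hs a b := EuclideanSpace.single g 1

/-- The Jordan–Wigner sign exponent: the number of occupied sites strictly to the left of `i`. -/
noncomputable def signCount (a b : ℤ) (g : Config a b) (i : ℤ) : ℕ :=
  (Finset.univ.filter fun j : {x : ℤ // x ∈ Finset.Icc a b} => j.1 < i ∧ g j = true).card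

/-- The annihilation operator `c_i` (zero if `i ∉ S`). -/
noncomputable def cAnn (a b : ℤ) (i : ℤ) : Module.End ℂ (Hs a b) where
  toFun ψ := WithLp.toLp 2 fun g =>
    if hi : i ∈ Finset.Icc a b then
      if g ⟨i, hi⟩ = false then
        ((-1 : ℂ) ^ signCount a b g i) * ψ (Function.update g ⟨i, hi⟩ true)
      else 0
    else 0
  map_add' ψ φ := by
    ext g
    simp only [PiLp.add_apply]
    split_ifs <;> simp [mul_add]
  map_smul' c ψ := by
    ext g
    simp only [PiLp.smul_apply, smul_eq_mul, RingHom.id_apply]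
    split_ifs <;> ring

/-- The creation operator `c*_i` (zero if `i ∉ S`). -/
noncomputable def cCr (a b : ℤ) (i : ℤ) : Module.End ℂ (Hs a b) where
  toFun ψ := WithLp.toLp 2 fun g =>
    if hi : i ∈ Finset.Icc a b then
      if g ⟨i, hi⟩ = true then
        ((-1 : ℂ) ^ signCount a b g i) * ψ (Function.update g ⟨i, hi⟩ false)
      else 0
    else 0
  map_add' ψ φ := by
    ext g
    simp only [PiLp.add_apply]
    split_ifs <;> simp [mul_add]
  map_smul' c ψ := by
    ext g
    simp only [PiLp.smul_apply, smul_eq_mul, RingHom.id_apply]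
    split_ifs <;> ring

/-- `q_{2i} = c_{2i+1} c*_{2i} c_{2i−1}`. -/
noncomputable def qOp (a b i : ℤ) : Module.End ℂ (Hs a b) :=
  cAnn a b (2 * i + 1) * cCr a b (2 * i) * cAnn a b (2 * i - 1)

/-- The Nicolai supercharge `Q[k,l] = Σ_{i=k}^{l} q_{2i}`. -/
noncomputable def QNic (a b k l : ℤ) : Module.End ℂ (Hs a b) :=
  ∑ i ∈ Finset.Icc k l, qOp a b i

/-- Membership in `Ξ̂_{k,l}`: a `{−1,+1}`-valued function on `{2k, …, 2l}` with no
forbidden sign triplet at interior even sites, constant on each two-site edge. -/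
def memXi (k l : ℤ) (f : ℤ → ℤ) : Prop :=
  (∀ i ∈ Finset.Icc (2 * k) (2 * l), f i = 1 ∨ f i = -1) ∧
  (∀ i : ℤ, k < i → i < l →
    ¬(f (2 * i - 1) = -1 ∧ f (2 * i) = 1 ∧ f (2 * i + 1) = -1) ∧
    ¬(f (2 * i - 1) = 1 ∧ f (2 * i) = -1 ∧ f (2 * i + 1) = 1)) ∧
  f (2 * k) = f (2 * k + 1) ∧ f (2 * l - 1) = f (2 * l)

/-- `ζ_i(+1) = c*_i`, `ζ_i(−1) = c_i`. -/
noncomputable def zeta (a b i : ℤ) (v : ℤ) : Module.End ℂ (Hs a b) :=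
  if v = 1 then cCr a b i else if v = -1 then cAnn a b i else 0

/-- The local fermion operator `Q(f) = ζ_{2k}(f(2k)) ζ_{2k+1}(f(2k+1)) ⋯ ζ_{2l}(f(2l))`,
the product taken in increasing site order. -/
noncomputable def QF (a b k l : ℤ) (f : ℤ → ℤ) : Module.End ℂ (Hs a b) :=
  ((List.range (2 * l - 2 * k + 1).toNat).map
    (fun j => zeta a b (2 * k + (j : ℤ)) (f (2 * k + (j : ℤ))))).prod

/-- `g` has a forbidden triplet at the even site `2i`. -/
def forbiddenAt (g : ℤ → Bool) (i : ℤ) : Prop :=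
  (g (2 * i - 1) = false ∧ g (2 * i) = true ∧ g (2 * i + 1) = false) ∨
  (g (2 * i - 1) = true ∧ g (2 * i) = false ∧ g (2 * i + 1) = true)

/-- Membership in `Υ̂_{k,l}`: no forbidden triplet at interior even sites and the
open SUSY boundary condition (only the values on `{2k, …, 2l}` are relevant). -/
def memUps (k l : ℤ) (g : ℤ → Bool) : Prop :=
  (∀ i : ℤ, k < i → i < l → ¬ forbiddenAt g i) ∧
  g (2 * k) = g (2 * k + 1) ∧ g (2 * l - 1) = g (2 * l)

/-- Extend a configuration on `S` to all of `ℤ` by `false`. -/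
noncomputable def ext (a b : ℤ) (g : Config a b) : ℤ → Bool :=
  fun i => if h : i ∈ Finset.Icc a b then g ⟨i, h⟩ else false

/-- The charge `f ∈ Ξ̂_{k,l}` is applicable to the configuration `g`. -/
def applicable (k l : ℤ) (f : ℤ → ℤ) (g : ℤ → Bool) : Prop :=
  ∀ i : ℤ, 2 * k ≤ i → i ≤ 2 * l → (f i = 1 → g i = false) ∧ (f i = -1 → g i = true)

/-- The configuration `f·g` resulting from the action of the charge `f ∈ Ξ̂_{k,l}` on `g`. -/
def applyCharge (k l : ℤ) (f : ℤ → ℤ) (g : ℤ → Bool) : ℤ → Bool :=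
  fun i => if 2 * k ≤ i ∧ i ≤ 2 * l then decide (f i = 1) else g i

/-- `Reachable p q g₀ g`: `g` is obtained from `g₀` by finitely many applications of
applicable charges from `Ξ̂(p,q) = ⋃_{p ≤ k < l ≤ q} Ξ̂_{k,l}`. -/
inductive Reachable (p q : ℤ) : (ℤ → Bool) → (ℤ → Bool) → Prop
  | refl (g : ℤ → Bool) : Reachable p q g g
  | step {g₀ g : ℤ → Bool} (k l : ℤ) (f : ℤ → ℤ) :
      Reachable p q g₀ g → p ≤ k → k < l → l ≤ q → memXi k l f → applicable k l f g →
      Reachable p q g₀ (applyCharge k l f g)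

/-- The fermion parity operator `P e_g = (−1)^{#occupied sites} e_g`. -/
noncomputable def parity (a b : ℤ) : Module.End ℂ (Hs a b) where
  toFun ψ := WithLp.toLp 2 fun g =>
    ((-1 : ℂ) ^ (Finset.univ.filter fun j : {x : ℤ // x ∈ Finset.Icc a b} => g j = true).card)
      * ψ g
  map_add' ψ φ := by
    ext g
    simp only [PiLp.add_apply]
    ring
  map_smul' c ψ := by
    ext g
    simp only [PiLp.smul_apply, smul_eq_mul, RingHom.id_apply]
    ring

lemma _root_.Finset.sum_ite_ne_zero_iff {ι M : Type*} [AddCommMonoid M] {s : Finset ι}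
    {p : ι → Prop} [DecidablePred p] {f : ι → M} (hf : ∀ i ∈ s, p i → f i ≠ 0)
    (hp : ∀ i ∈ s, ∀ j ∈ s, p i → p j → i = j) :
    (∑ i ∈ s, if p i then f i else 0) ≠ 0 ↔ ∃ i ∈ s, p i := by
  constructor
  · intro hs
    by_contra! hn
    exact hs (Finset.sum_eq_zero fun i hi => if_neg (hn i hi))
  · rintro ⟨i, hi, hpi⟩
    rw [Finset.sum_eq_single_of_mem i hi
      fun j hj hji => if_neg fun hpj => hji (hp j hj i hi hpj hpi), if_pos hpi]
    exact hf i hi hpi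

section Operators

variable {a b : ℤ}

lemma e_apply (g g' : Config a b) : e a b g g' = if g' = g then 1 else 0 := by
  simp [e, PiLp.single_apply]

lemma inner_e_left (g : Config a b) (x : Hs a b) : inner ℂ (e a b g) x = x g := by
  rw [e, EuclideanSpace.inner_single_left, map_one, one_mul]

lemma adjoint_apply_e (T : Module.End ℂ (Hs a b)) (g g' : Config a b) :
    LinearMap.adjoint T (e a b g) g' = starRingEnd ℂ (T (e a b g') g) := by
  rw [← inner_e_left, LinearMap.adjoint_inner_right, ← inner_conj_symm, inner_e_left]

lemma Hs_eq_zero_iff (x : Hs a b) : x = 0 ↔ ∀ g, x g = 0 := by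
  simp [PiLp.ext_iff]

lemma ext_of_mem (g : Config a b) {j : ℤ} (hj : j ∈ Finset.Icc a b) :
    ext a b g j = g ⟨j, hj⟩ :=
  dif_pos hj

lemma signCount_update_of_le (g : Config a b) {j : ℤ} (hj : j ∈ Finset.Icc a b) (v : Bool)
    {i : ℤ} (hij : i ≤ j) :
    signCount a b (Function.update g ⟨j, hj⟩ v) i = signCount a b g i := by
  unfold signCount
  congr 1
  refine Finset.filter_congr fun x _ => ?_
  by_cases hx : x = ⟨j, hj⟩
  · subst hx; simp only [Function.update_self]; omega
  · rw [Function.update_of_ne hx]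

lemma cAnn_apply {i : ℤ} (hi : i ∈ Finset.Icc a b) (ψ : Hs a b) (g : Config a b) :
    cAnn a b i ψ g = if g ⟨i, hi⟩ = false then
      (-1) ^ signCount a b g i * ψ (Function.update g ⟨i, hi⟩ true) else 0 := by
  simp [cAnn, hi]

lemma cCr_apply {i : ℤ} (hi : i ∈ Finset.Icc a b) (ψ : Hs a b) (g : Config a b) :
    cCr a b i ψ g = if g ⟨i, hi⟩ = true then
      (-1) ^ signCount a b g i * ψ (Function.update g ⟨i, hi⟩ false) else 0 := by
  simp [cCr, hi]

end Operators

abbrev HasTriple (G : ℤ → Bool) (i : ℤ) (v : Bool) : Prop :=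
  G (2 * i - 1) = v ∧ G (2 * i) = !v ∧ G (2 * i + 1) = v

def flipTriple {a b : ℤ} (g : Config a b) (i : ℤ) : Config a b :=
  fun x => if 2 * i - 1 ≤ x.1 ∧ x.1 ≤ 2 * i + 1 then !g x else g x

section Triples

variable {a b : ℤ}

lemma qOp_apply {i : ℤ} (h1 : a ≤ 2 * i - 1) (h3 : 2 * i + 1 ≤ b) (ψ : Hs a b)
    (g : Config a b) :
    qOp a b i ψ g = if HasTriple (ext a b g) i false then
      (-1) ^ (signCount a b g (2 * i - 1) + signCount a b g (2 * i) + signCount a b g (2 * i + 1))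
        * ψ (flipTriple g i) else 0 := by
  have m1 : 2 * i - 1 ∈ Finset.Icc a b := Finset.mem_Icc.2 ⟨h1, by omega⟩
  have m2 : 2 * i ∈ Finset.Icc a b := Finset.mem_Icc.2 ⟨by omega, by omega⟩
  have m3 : 2 * i + 1 ∈ Finset.Icc a b := Finset.mem_Icc.2 ⟨by omega, h3⟩
  have n21 : (⟨2 * i, m2⟩ : {x // x ∈ Finset.Icc a b}) ≠ ⟨2 * i + 1, m3⟩ := by simp
  have n11 : (⟨2 * i - 1, m1⟩ : {x // x ∈ Finset.Icc a b}) ≠ ⟨2 * i + 1, m3⟩ := by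
    simp; omega
  have n12 : (⟨2 * i - 1, m1⟩ : {x // x ∈ Finset.Icc a b}) ≠ ⟨2 * i, m2⟩ := by simp
  simp only [qOp, Module.End.mul_apply, cAnn_apply m3, cCr_apply m2, cAnn_apply m1,
    Function.update_of_ne n21, Function.update_of_ne n11, Function.update_of_ne n12,
    signCount_update_of_le _ m3 _ (show 2 * i ≤ 2 * i + 1 by omega),
    signCount_update_of_le _ m3 _ (show 2 * i - 1 ≤ 2 * i + 1 by omega),
    signCount_update_of_le _ m2 _ (show 2 * i - 1 ≤ 2 * i by omega),
    HasTriple, ext_of_mem g m1, ext_of_mem g m2, ext_of_mem g m3, Bool.not_false]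
  by_cases hp :
      g ⟨2 * i - 1, m1⟩ = false ∧ g ⟨2 * i, m2⟩ = true ∧ g ⟨2 * i + 1, m3⟩ = false
  · obtain ⟨p1, p2, p3⟩ := hp
    have hflip : Function.update (Function.update (Function.update g ⟨2 * i + 1, m3⟩ true)
        ⟨2 * i, m2⟩ false) ⟨2 * i - 1, m1⟩ true = flipTriple g i := by
      funext ⟨x, hx⟩
      simp only [Function.update_apply, flipTriple, Subtype.mk.injEq]
      split_ifs <;> first | omega | (subst x; simp_all) | rfl
    simp only [p1, p2, p3, hflip, and_self, if_true]
    ring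
  · rw [if_neg hp]
    split_ifs <;> simp_all

lemma flipTriple_flipTriple (g : Config a b) (i : ℤ) : flipTriple (flipTriple g i) i = g := by
  funext x
  simp only [flipTriple]
  split_ifs <;> simp

lemma flipTriple_ne {g : Config a b} {i j : ℤ} (hij : i ≠ j) (hi : 2 * i ∈ Finset.Icc a b) :
    flipTriple g i ≠ flipTriple g j := by
  intro heq
  have := congrFun heq ⟨2 * i, hi⟩
  simp only [flipTriple] at this
  rw [if_pos (by omega), if_neg (by omega)] at this
  exact Bool.not_ne_self _ this

lemma hasTriple_flipTriple {i : ℤ} (h1 : a ≤ 2 * i - 1) (h3 : 2 * i + 1 ≤ b) (g : Config a b)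
    (v : Bool) : HasTriple (ext a b (flipTriple g i)) i (!v) ↔ HasTriple (ext a b g) i v := by
  have m1 : 2 * i - 1 ∈ Finset.Icc a b := Finset.mem_Icc.2 ⟨h1, by omega⟩
  have m2 : 2 * i ∈ Finset.Icc a b := Finset.mem_Icc.2 ⟨by omega, by omega⟩
  have m3 : 2 * i + 1 ∈ Finset.Icc a b := Finset.mem_Icc.2 ⟨by omega, h3⟩
  simp only [HasTriple, ext_of_mem _ m1, ext_of_mem _ m2, ext_of_mem _ m3, flipTriple]
  rw [if_pos (by omega), if_pos (by omega), if_pos (by omega)]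
  simp

end Triples

section Supercharge

variable {a b k l : ℤ}

lemma QNic_e_apply_ne_zero_iff (ha : a ≤ 2 * k - 1) (hb : 2 * l + 1 ≤ b) (g g' : Config a b) :
    QNic a b k l (e a b g) g' ≠ 0 ↔
      ∃ i ∈ Finset.Icc k l, HasTriple (ext a b g') i false ∧ flipTriple g' i = g := by
  rw [QNic, LinearMap.sum_apply, WithLp.ofLp_sum, Finset.sum_apply,
    Finset.sum_congr rfl fun i hi => qOp_apply
      (by have := Finset.mem_Icc.1 hi; omega) (by have := Finset.mem_Icc.1 hi; omega) _ g']
  simp only [e_apply, mul_ite, mul_one, mul_zero, ← ite_and]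
  refine Finset.sum_ite_ne_zero_iff (fun _ _ _ => pow_ne_zero _ (by norm_num)) ?_
  intro i hi j hj ⟨_, hgi⟩ ⟨_, hgj⟩
  by_contra hij
  have := Finset.mem_Icc.1 hi
  exact flipTriple_ne hij (Finset.mem_Icc.2 ⟨by omega, by omega⟩) (hgi.trans hgj.symm)

lemma QNic_e_eq_zero_iff (ha : a ≤ 2 * k - 1) (hb : 2 * l + 1 ≤ b) (g : Config a b) :
    QNic a b k l (e a b g) = 0 ↔ ∀ i ∈ Finset.Icc k l, ¬HasTriple (ext a b g) i true := by
  rw [Hs_eq_zero_iff]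
  constructor
  · intro hQ i hi hg
    have := Finset.mem_Icc.1 hi
    refine (QNic_e_apply_ne_zero_iff ha hb _ _).2 ⟨i, hi, ?_, flipTriple_flipTriple g i⟩
      (hQ (flipTriple g i))
    exact (hasTriple_flipTriple (by omega) (by omega) g true).2 hg
  · intro hg g'
    by_contra hne
    obtain ⟨i, hi, ht, rfl⟩ := (QNic_e_apply_ne_zero_iff ha hb _ _).1 hne
    have := Finset.mem_Icc.1 hi
    exact hg i hi ((hasTriple_flipTriple (by omega) (by omega) g' false).2 ht)

lemma adjoint_QNic_e_eq_zero_iff (ha : a ≤ 2 * k - 1) (hb : 2 * l + 1 ≤ b) (g : Config a b) :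
    LinearMap.adjoint (QNic a b k l) (e a b g) = 0 ↔
      ∀ i ∈ Finset.Icc k l, ¬HasTriple (ext a b g) i false := by
  simp only [Hs_eq_zero_iff, adjoint_apply_e, map_eq_zero]
  constructor
  · intro hQ i hi hg
    exact (QNic_e_apply_ne_zero_iff ha hb _ _).2 ⟨i, hi, hg, rfl⟩ (hQ (flipTriple g i))
  · intro hg g'
    by_contra hne
    obtain ⟨i, hi, ht, -⟩ := (QNic_e_apply_ne_zero_iff ha hb _ _).1 hne
    exact hg i hi ht

lemma QNic_e_eq_zero_and_adjoint_iff (ha : a ≤ 2 * k - 1) (hb : 2 * l + 1 ≤ b)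
    (g : Config a b) :
    QNic a b k l (e a b g) = 0 ∧ LinearMap.adjoint (QNic a b k l) (e a b g) = 0 ↔
      ∀ i ∈ Finset.Icc k l, ¬forbiddenAt (ext a b g) i := by
  rw [QNic_e_eq_zero_iff ha hb, adjoint_QNic_e_eq_zero_iff ha hb]
  exact ⟨fun ⟨hT, hF⟩ i hi hf => Or.elim hf (hF i hi) (hT i hi),
    fun h => ⟨fun i hi ht => h i hi (Or.inr ht), fun i hi ht => h i hi (Or.inl ht)⟩⟩

end Supercharge

lemma forbiddenAt_iff (G : ℤ → Bool) (i : ℤ) :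
    forbiddenAt G i ↔ G (2 * i - 1) ≠ G (2 * i) ∧ G (2 * i) ≠ G (2 * i + 1) := by
  unfold forbiddenAt
  cases G (2 * i - 1) <;> cases G (2 * i) <;> cases G (2 * i + 1) <;> decide

lemma forbiddenAt_congr {G G' : ℤ → Bool} {i : ℤ}
    (h : ∀ j, 2 * i - 1 ≤ j → j ≤ 2 * i + 1 → G j = G' j) :
    forbiddenAt G i ↔ forbiddenAt G' i := by
  unfold forbiddenAt
  rw [h (2 * i - 1) le_rfl (by omega), h (2 * i) (by omega) (by omega),
    h (2 * i + 1) (by omega) le_rfl]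

section Boundary

variable {k l : ℤ} {g G : ℤ → Bool}

lemma memUps_of_forall_not_forbiddenAt (hkl : k < l)
    (hG : ∀ j, 2 * k ≤ j → j ≤ 2 * l → G j = g j) (hleft : G (2 * k - 1) ≠ g (2 * k))
    (hright : G (2 * l + 1) ≠ g (2 * l)) (hfree : ∀ i ∈ Finset.Icc k l, ¬forbiddenAt G i) :
    memUps k l g := by
  refine ⟨fun i hki hil hf => hfree i (Finset.mem_Icc.2 ⟨hki.le, hil.le⟩)
    ((forbiddenAt_congr fun j h1 h2 => hG j (by omega) (by omega)).2 hf), ?_, ?_⟩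
  · have := hfree k (Finset.mem_Icc.2 ⟨le_rfl, hkl.le⟩)
    rw [forbiddenAt_iff, hG (2 * k) le_rfl (by omega), hG (2 * k + 1) (by omega) (by omega)] at this
    by_contra hne
    exact this ⟨hleft, hne⟩
  · have := hfree l (Finset.mem_Icc.2 ⟨hkl.le, le_rfl⟩)
    rw [forbiddenAt_iff, hG (2 * l - 1) (by omega) (by omega), hG (2 * l) (by omega) le_rfl] at this
    by_contra hne
    exact this ⟨hne, Ne.symm hright⟩

lemma not_forbiddenAt_of_memUps (hkl : k < l)
    (hG : ∀ j, 2 * k ≤ j → j ≤ 2 * l → G j = g j) (hU : memUps k l g) :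
    ∀ i ∈ Finset.Icc k l, ¬forbiddenAt G i := by
  obtain ⟨hint, hleft, hright⟩ := hU
  intro i hi hf
  obtain ⟨hki, hil⟩ := Finset.mem_Icc.1 hi
  rcases hki.eq_or_lt with rfl | hki
  · rw [forbiddenAt_iff, hG (2 * k) le_rfl (by omega), hG (2 * k + 1) (by omega) (by omega)] at hf
    exact hf.2 hleft
  rcases hil.eq_or_lt with rfl | hil
  · rw [forbiddenAt_iff, hG (2 * i - 1) (by omega) (by omega), hG (2 * i) (by omega) le_rfl] at hf
    exact hf.1 hright
  exact hint i hki hil ((forbiddenAt_congr fun j h1 h2 => hG j (by omega) (by omega)).1 hf)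

end Boundary

lemma ext_eq_of_extends {k l : ℤ} {g : ℤ → Bool} {gext : Config (2 * k - 1) (2 * l + 1)}
    (hext : ∀ (i : ℤ) (h : i ∈ Finset.Icc (2 * k - 1) (2 * l + 1)),
      2 * k ≤ i → i ≤ 2 * l → gext ⟨i, h⟩ = g i) :
    ∀ j, 2 * k ≤ j → j ≤ 2 * l → ext _ _ gext j = g j := fun j h1 h2 =>
  (ext_of_mem gext (Finset.mem_Icc.2 ⟨by omega, by omega⟩)).trans (hext j _ h1 h2)

/-- a classical state on `{2k, …, 2l}` is open-edge supersymmetric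
(every extension to `S = {2k−1, …, 2l+1}` is annihilated by `Q[k,l]` and `Q[k,l]*`)
iff its configuration belongs to `Υ̂_{k,l}`. -/
theorem open_edge_susy_classical_iff (k l : ℤ) (hkl : k < l) (g : ℤ → Bool) :
    (∀ gext : Config (2 * k - 1) (2 * l + 1),
        (∀ (i : ℤ) (h : i ∈ Finset.Icc (2 * k - 1) (2 * l + 1)),
          2 * k ≤ i → i ≤ 2 * l → gext ⟨i, h⟩ = g i) →
        QNic (2 * k - 1) (2 * l + 1) k l (e (2 * k - 1) (2 * l + 1) gext) = 0 ∧
        LinearMap.adjoint (QNic (2 * k - 1) (2 * l + 1) k l)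
          (e (2 * k - 1) (2 * l + 1) gext) = 0)
    ↔ memUps k l g := by
  constructor
  · intro H
    -- edge values chosen so that a failing boundary condition creates a forbidden triplet
    let gext : Config (2 * k - 1) (2 * l + 1) := fun j =>
      if j.1 = 2 * k - 1 then !g (2 * k) else if j.1 = 2 * l + 1 then !g (2 * l) else g j
    have hext : ∀ (i : ℤ) (h : i ∈ Finset.Icc (2 * k - 1) (2 * l + 1)),
        2 * k ≤ i → i ≤ 2 * l → gext ⟨i, h⟩ = g i := fun i _ h1 h2 => by
      simp only [gext]
      rw [if_neg (by omega), if_neg (by omega)]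
    refine memUps_of_forall_not_forbiddenAt hkl (ext_eq_of_extends hext) ?_ ?_
      ((QNic_e_eq_zero_and_adjoint_iff le_rfl le_rfl gext).1 (H gext hext))
    · rw [ext_of_mem gext (Finset.mem_Icc.2 ⟨le_rfl, by omega⟩)]
      simp [gext]
    · rw [ext_of_mem gext (Finset.mem_Icc.2 ⟨by omega, le_rfl⟩)]
      simp [gext, show 2 * l + 1 ≠ 2 * k - 1 by omega]
  · intro hU gext hext
    exact (QNic_e_eq_zero_and_adjoint_iff le_rfl le_rfl gext).2
      (not_forbiddenAt_of_memUps hkl (ext_eq_of_extends hext) hU)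

end Nicolai
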